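/- arXiv:math/9906185 — 3 statements merged into one kernel-verified Lean document; each statement's English description precedes it below -/
import Mathlib

section
/- For every natural number n, the class C^n is closed under suprema: if ι is a nonempty (small) index type and f : ι → Cardinal satisfies f i ∈ C^n for every i, then the supremum ⨆ i, f i belongs to C^n. -/
open Cardinal Ordinal

/-- Shelah's classes `C^n`: `C^0` is the class of all infinite cardinals, and
`C^{n+1}` consists of those `l ∈ C^n` such that the order type of
`{c ∈ C^n : c < l}` (under `<`) equals the initial ordinal `l.ord` of `l`. -/
noncomputable def ShelahC : ℕ → Set Cardinal.{0}
  | 0 => {c | ℵ₀ ≤ c}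
  | (n+1) => {l | l ∈ ShelahC n ∧
      Ordinal.type ((· < ·) : {c : Cardinal.{0} // c ∈ ShelahC n ∧ c < l} →
        {c : Cardinal.{0} // c ∈ ShelahC n ∧ c < l} → Prop) = Ordinal.lift.{1, 0} l.ord}

theorem aux_type_le {α : Type*} {r : α → α → Prop} [IsWellOrder α r] {a : Ordinal}
    (h : ∀ x, Ordinal.typein r x < a) : Ordinal.type r ≤ a := by
  by_contra hc
  push_neg at hc
  have := h (Ordinal.enum r ⟨a, hc⟩)
  rw [Ordinal.typein_enum] at this
  exact lt_irrefl a this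

/-- For every `n`, the class `C^n` is closed under suprema of nonempty small families. -/
theorem shelahC_closed_under_iSup (n : ℕ) (ι : Type) [Nonempty ι] (f : ι → Cardinal)
    (hf : ∀ i, f i ∈ ShelahC n) : (⨆ i, f i) ∈ ShelahC n := by
  induction n with
  | zero =>
    exact (show ℵ₀ ≤ _ from hf (Classical.arbitrary ι)).trans (le_ciSup (Cardinal.bddAbove_range f) _)
  | succ n IH =>
    by_cases hattain : ∃ i, f i = ⨆ i, f i
    · obtain ⟨i, hi⟩ := hattain
      exact hi ▸ hf i
    · push_neg at hattain
      have hbdd := Cardinal.bddAbove_range f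
      have hlt : ∀ i, f i < ⨆ i, f i := fun i =>
        (le_ciSup hbdd i).lt_of_ne (hattain i)
      set lam := ⨆ i, f i with hlam
      set r : {c : Cardinal.{0} // c ∈ ShelahC n ∧ c < lam} →
          {c : Cardinal.{0} // c ∈ ShelahC n ∧ c < lam} → Prop := (· < ·) with hr
      refine ⟨IH (fun i => (hf i).1), le_antisymm ?_ ?_⟩
    -- upper bound: every typein is small
      · apply aux_type_le
        intro x
        -- find i with x.val < f i
        have hx : ∃ i, x.val < f i := by
          by_contra h
          push_neg at h
          exact absurd (ciSup_le h) (not_le.2 x.2.2)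
        obtain ⟨i, hi⟩ := hx
        have hemb : Ordinal.typein r x ≤
            Ordinal.type ((· < ·) : {c : Cardinal.{0} // c ∈ ShelahC n ∧ c < f i} →
              {c : Cardinal.{0} // c ∈ ShelahC n ∧ c < f i} → Prop) := by
          rw [← Ordinal.type_subrel r x]
          refine (Ordinal.type_le_iff').2 ⟨RelEmbedding.ofMonotone
            (fun b => ⟨b.val.val, b.val.2.1, lt_trans b.2 hi⟩) ?_⟩
          intro a b hab
          exact hab
        refine hemb.trans_lt ?_
        rw [(hf i).2]
        exact Ordinal.lift_lt.2 (Cardinal.ord_lt_ord.2 (hlt i))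
      · rw [Cardinal.lift_ord, Cardinal.ord_le, Ordinal.card_type,
          Cardinal.lift_iSup hbdd]
        refine ciSup_le fun i => ?_
        have hcard : Cardinal.lift.{1,0} (f i) =
            #{c : Cardinal.{0} // c ∈ ShelahC n ∧ c < f i} := by
          have h := congrArg Ordinal.card (hf i).2
          rw [Ordinal.card_type, ← Ordinal.lift_card, Cardinal.card_ord] at h
          exact h.symm
        rw [hcard]
        exact Cardinal.mk_subtype_mono fun c hc => ⟨hc.1, hc.2.trans (hlt i)⟩
end

section
/- If λ ∈ C^{n+1} for some natural number n, then λ is a limit of elements of C^n: for every cardinal ξ < λ there exists μ ∈ C^n with ξ < μ < λ. (This is the analogue, for fixed points of the ℵ-function, of the paper's Lemma 1.4.3 that a k-good cardinal is a limit of (k−1)-good cardinals.) -/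
open Cardinal Ordinal

/-! Below `l ∈ C^{n+1}` there are `l` elements of `C^n`, while below any `ξ < l` there are at most
`ξ + 1 < l` cardinals at all; so `C^n` has elements strictly between `ξ` and `l`. -/

theorem Cardinal.mk_Iic_le_lift_add_one (ξ : Cardinal.{u}) :
    #(Set.Iic ξ) ≤ Cardinal.lift.{u + 1} (ξ + 1) := by
  have h : #(Set.Iic ξ) ≤ #(Set.Iio (ξ.ord + 1)) :=
    mk_le_of_injective
      (f := fun c => ⟨(c : Cardinal).ord, Order.lt_add_one_iff.2 (ord_le_ord.2 c.2)⟩)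
      fun a b hab => Subtype.ext (ord_injective (congrArg Subtype.val hab))
  rwa [mk_Iio_ordinal, card_add_one, card_ord] at h

namespace ShelahC

theorem aleph0_le : ∀ {n : ℕ} {c : Cardinal}, c ∈ ShelahC n → ℵ₀ ≤ c
  | 0, _, hc => hc
  | _ + 1, _, hc => aleph0_le hc.1

theorem mk_lt_of_mem_succ {n : ℕ} {l : Cardinal} (hl : l ∈ ShelahC (n + 1)) :
    #{c : Cardinal // c ∈ ShelahC n ∧ c < l} = Cardinal.lift.{1} l := by
  simpa only [card_type, ← lift_card, card_ord] using congrArg card hl.2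

end ShelahC

/-- Every element of `C^{n+1}` is a limit of elements of `C^n`. -/
theorem shelahC_succ_isLimit_of_shelahC (n : ℕ) (l : Cardinal) (hl : l ∈ ShelahC (n + 1))
    (ξ : Cardinal) (hξ : ξ < l) : ∃ μ ∈ ShelahC n, ξ < μ ∧ μ < l := by
  by_contra! h
  have hsub : {c | c ∈ ShelahC n ∧ c < l} ⊆ Set.Iic ξ := fun c hc =>
    not_lt.1 fun hξc => (h c hc.1 hξc).not_gt hc.2
  have hle : Cardinal.lift.{1} l ≤ Cardinal.lift.{1} (ξ + 1) :=
    (ShelahC.mk_lt_of_mem_succ hl).symm.trans_le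
      ((mk_le_mk_of_subset hsub).trans (mk_Iic_le_lift_add_one ξ))
  have hinf := ShelahC.aleph0_le hl
  exact (lift_le.1 hle).not_gt (add_lt_of_lt hinf hξ (one_lt_aleph0.trans_le hinf))
end

section
/- Fix a natural number n ≥ 1 and an infinite cardinal ξ. Let ν be the least element of C^n strictly above ξ, and let e : Ordinal → Cardinal be the increasing enumeration of {c ∈ C^n : ν < c}. Define ρ : ℕ → Cardinal by ρ 0 = ν and ρ (k+1) = e ((ρ k).ord). Then ⨆ k, ρ k is the least element of C^{n+1} strictly above ξ (the paper's f_{n+1}(ξ,0)). -/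
open Cardinal Ordinal Set

/-! ### Auxiliary order-type machinery -/

instance (s : Set Ordinal.{0}) :
    IsWellOrder (Subtype s) (Subrel ((· < ·) : Ordinal.{0} → Ordinal.{0} → Prop) s) :=
  inferInstanceAs (IsWellOrder _ (Subrel ((· < ·) : Ordinal.{0} → Ordinal.{0} → Prop) (· ∈ s)))

/-- Order type of a set of ordinals, as an `Ordinal.{1}`. -/
noncomputable def otype (s : Set Ordinal.{0}) : Ordinal.{1} :=
  Ordinal.type (Subrel ((· < ·) : Ordinal.{0} → Ordinal.{0} → Prop) s)

theorem otype_mono {s t : Set Ordinal.{0}} (h : s ⊆ t) : otype s ≤ otype t := by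
  rw [otype, otype, type_le_iff']
  exact ⟨⟨⟨Set.inclusion h, Set.inclusion_injective h⟩, Iff.rfl⟩⟩

theorem otype_Iio (o : Ordinal.{0}) : otype (Iio o) = Ordinal.lift.{1} o := by
  rw [otype, ← typein_ordinal o, ← type_subrel]
  rfl

theorem otype_le_of_subset_Iio {s : Set Ordinal.{0}} {o : Ordinal.{0}} (h : s ⊆ Iio o) :
    otype s ≤ Ordinal.lift.{1} o :=
  (otype_mono h).trans_eq (otype_Iio o)

theorem otype_enumOrd {s : Set Ordinal.{0}} (hs : ¬ BddAbove s) (a : Ordinal.{0}) :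
    otype {x | x ∈ s ∧ x < Ordinal.enumOrd s a} = Ordinal.lift.{1} a := by
  have hf : ∀ b : Iio a, Ordinal.enumOrd s b.1 ∈ {x | x ∈ s ∧ x < Ordinal.enumOrd s a} :=
    fun b => ⟨enumOrd_mem hs _, (enumOrd_strictMono hs) b.2⟩
  let f : Iio a → {x | x ∈ s ∧ x < Ordinal.enumOrd s a} := fun b => ⟨_, hf b⟩
  have hbij : Function.Bijective f := by
    constructor
    · intro x y hxy
      exact Subtype.ext (enumOrd_injective hs (congrArg Subtype.val hxy))
    · rintro ⟨x, hx, hxa⟩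
      obtain ⟨b, rfl⟩ := enumOrd_surjective hs hx
      exact ⟨⟨b, (enumOrd_strictMono hs).lt_iff_lt.1 hxa⟩, rfl⟩
  have iso : Subrel ((· < ·) : Ordinal.{0} → Ordinal.{0} → Prop) (Iio a) ≃r
      Subrel ((· < ·) : Ordinal.{0} → Ordinal.{0} → Prop) {x | x ∈ s ∧ x < Ordinal.enumOrd s a} :=
    ⟨Equiv.ofBijective f hbij, by
      intro x y
      exact (enumOrd_strictMono hs).lt_iff_lt⟩
  rw [otype, ← iso.ordinal_type_eq]
  rw [show Ordinal.type (Subrel ((· < ·) : Ordinal.{0} → Ordinal.{0} → Prop) (Iio a))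
      = otype (Iio a) from rfl]
  exact otype_Iio a

theorem enumOrd_eq_of_otype {s : Set Ordinal.{0}} (hs : ¬ BddAbove s) {a b : Ordinal.{0}}
    (hb : b ∈ s) (h : otype {x | x ∈ s ∧ x < b} = Ordinal.lift.{1} a) :
    Ordinal.enumOrd s a = b := by
  obtain ⟨a', rfl⟩ := enumOrd_surjective hs hb
  rw [otype_enumOrd hs, Ordinal.lift_inj] at h
  rw [h]

theorem otype_split (s : Set Ordinal.{0}) (p : Ordinal.{0}) :
    otype s ≤ Ordinal.lift.{1} (p + 1) + otype {x | x ∈ s ∧ p < x} := by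
  rw [← otype_Iio (p + 1), otype, otype, otype, ← type_sum_lex, type_le_iff']
  refine ⟨⟨⟨fun x => if h : x.1 ≤ p then Sum.inl ⟨x.1, by
      exact Order.lt_add_one_iff.2 h⟩
    else Sum.inr ⟨x.1, x.2, not_le.1 h⟩, ?_⟩, ?_⟩⟩
  · intro x y hxy
    by_cases h1 : x.1 ≤ p <;> by_cases h2 : y.1 ≤ p <;>
      simp only [h1, h2, dif_pos, dif_neg, not_false_iff, Sum.inl.injEq, Sum.inr.injEq,
        Subtype.mk.injEq] at hxy <;>
      first
        | exact Subtype.ext (Subtype.mk.inj hxy)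
        | cases hxy
  · intro x y
    show Sum.Lex _ _ (if h : x.1 ≤ p then _ else _) (if h : y.1 ≤ p then _ else _) ↔ _
    by_cases h1 : x.1 ≤ p <;> by_cases h2 : y.1 ≤ p <;>
      simp only [h1, h2, dif_pos, dif_neg, not_false_iff, Sum.lex_inl_inl, Sum.lex_inr_inr,
        Sum.lex_inr_inl, Sum.Lex.sep, Subrel, Order.Preimage, Subtype.mk_lt_mk]
    · exact iff_of_true trivial (h1.trans_lt (not_le.1 h2))
    · simp only [false_iff, not_lt]
      exact (h2.trans (not_le.1 h1).le)

theorem type_compare (P : Set Cardinal.{0}) (l : Cardinal.{0}) :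
    Ordinal.type ((· < ·) : {c : Cardinal.{0} // c ∈ P ∧ c < l} →
        {c : Cardinal.{0} // c ∈ P ∧ c < l} → Prop)
      = otype {o | o ∈ Cardinal.ord '' P ∧ o < l.ord} := by
  have hf : ∀ c : {c : Cardinal.{0} // c ∈ P ∧ c < l},
      c.1.ord ∈ {o | o ∈ Cardinal.ord '' P ∧ o < l.ord} :=
    fun c => ⟨⟨c.1, c.2.1, rfl⟩, Cardinal.ord_lt_ord.2 c.2.2⟩
  let f : {c : Cardinal.{0} // c ∈ P ∧ c < l} → {o | o ∈ Cardinal.ord '' P ∧ o < l.ord} :=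
    fun c => ⟨_, hf c⟩
  have hbij : Function.Bijective f := by
    constructor
    · intro x y hxy
      exact Subtype.ext (Cardinal.ord_injective (congrArg Subtype.val hxy))
    · rintro ⟨o, ⟨c, hc, rfl⟩, ho⟩
      exact ⟨⟨c, hc, Cardinal.ord_lt_ord.1 ho⟩, rfl⟩
  have iso : ((· < ·) : {c : Cardinal.{0} // c ∈ P ∧ c < l} →
        {c : Cardinal.{0} // c ∈ P ∧ c < l} → Prop) ≃r
      Subrel ((· < ·) : Ordinal.{0} → Ordinal.{0} → Prop)
        {o | o ∈ Cardinal.ord '' P ∧ o < l.ord} :=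
    ⟨Equiv.ofBijective f hbij, by
      intro x y
      change x.1.ord < y.1.ord ↔ x < y
      rw [Cardinal.ord_lt_ord, Subtype.coe_lt_coe]⟩
  exact iso.ordinal_type_eq

/-! ### The classes `C^n` as sets of ordinals -/

noncomputable def SnSet (n : ℕ) : Set Ordinal.{0} := Cardinal.ord '' ShelahC n

theorem shelahC_infinite : ∀ n, ShelahC n ⊆ {c | ℵ₀ ≤ c}
  | 0 => fun _ hc => hc
  | (n+1) => fun _ hc => shelahC_infinite n hc.1

theorem ord_iSup {ι : Type} [Nonempty ι] (c : ι → Cardinal.{0}) :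
    (⨆ i, c i).ord = ⨆ i, (c i).ord := by
  apply le_antisymm
  · rw [Cardinal.ord_le]
    refine ciSup_le fun i => ?_
    rw [← Cardinal.card_ord (c i)]
    exact Ordinal.card_le_card (Ordinal.le_iSup _ i)
  · exact Ordinal.iSup_le fun i => Cardinal.ord_le_ord.2 (le_ciSup (Cardinal.bddAbove_range c) i)

theorem mem_shelahC_succ_iff {n : ℕ} (h : ¬ BddAbove (SnSet n)) (l : Cardinal.{0}) :
    l ∈ ShelahC (n+1) ↔ l ∈ ShelahC n ∧ Ordinal.enumOrd (SnSet n) l.ord = l.ord := by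
  constructor
  · rintro ⟨hl, ht⟩
    refine ⟨hl, ?_⟩
    rw [type_compare] at ht
    exact enumOrd_eq_of_otype h ⟨l, hl, rfl⟩ ht
  · rintro ⟨hl, hfix⟩
    refine ⟨hl, ?_⟩
    rw [type_compare]
    have := otype_enumOrd h l.ord
    rw [hfix] at this
    exact this

theorem snSet_spec (n : ℕ) : ¬ BddAbove (SnSet n) ∧ IsClosed (SnSet n) := by
  induction n with
  | zero =>
    constructor
    · rintro ⟨b, hb⟩
      have hmem : (Order.succ (max ℵ₀ b.card)).ord ∈ SnSet 0 :=
        ⟨_, show ℵ₀ ≤ _ from le_trans (le_max_left _ _) (Order.le_succ _), rfl⟩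
      exact absurd (hb hmem)
        (not_le.2 (Cardinal.lt_ord.2 ((le_max_right _ _).trans_lt (Order.lt_succ _))))
    · refine isClosed_iff_iSup.2 fun {ι} hι f hf => ?_
      have : ∀ i, ∃ c : Cardinal.{0}, ℵ₀ ≤ c ∧ c.ord = f i := fun i => by
        obtain ⟨c, hc, hcf⟩ := hf i
        exact ⟨c, hc, hcf⟩
      choose c hc hcf using this
      have : Nonempty ι := hι
      refine ⟨⨆ i, c i, show ℵ₀ ≤ _ from le_trans (hc (Classical.arbitrary ι))
        (le_ciSup (Cardinal.bddAbove_range c) _), ?_⟩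
      rw [ord_iSup c]
      exact iSup_congr hcf
  | succ n ih =>
    have hnormal : Order.IsNormal (Ordinal.enumOrd (SnSet n)) :=
      (Ordinal.enumOrd_isNormal_iff_isClosed ih.1).2 ih.2
    have hset : SnSet (n+1) = {o | o ∈ SnSet n ∧ Ordinal.enumOrd (SnSet n) o = o} := by
      ext o
      constructor
      · rintro ⟨l, hl, rfl⟩
        rw [mem_shelahC_succ_iff ih.1] at hl
        exact ⟨⟨l, hl.1, rfl⟩, hl.2⟩
      · rintro ⟨⟨l, hl, rfl⟩, hfix⟩
        exact ⟨l, (mem_shelahC_succ_iff ih.1 l).2 ⟨hl, hfix⟩, rfl⟩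
    constructor
    · rintro ⟨b, hb⟩
      have hfix : Ordinal.enumOrd (SnSet n) (Ordinal.nfp (Ordinal.enumOrd (SnSet n)) (b + 1))
          = Ordinal.nfp (Ordinal.enumOrd (SnSet n)) (b + 1) := Ordinal.nfp_fp hnormal (b + 1)
      have hxmem : Ordinal.nfp (Ordinal.enumOrd (SnSet n)) (b + 1) ∈ SnSet (n+1) := by
        rw [hset]
        exact ⟨hfix ▸ Ordinal.enumOrd_mem ih.1 _, hfix⟩
      have hbx : b < Ordinal.nfp (Ordinal.enumOrd (SnSet n)) (b + 1) :=
        lt_of_lt_of_le (lt_add_one b) (Ordinal.le_nfp _ _)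
      exact hbx.not_ge (hb hxmem)
    · rw [hset]
      refine isClosed_iff_iSup.2 fun {ι} hι f hf => ?_
      have : Nonempty ι := hι
      refine ⟨isClosed_iff_iSup.1 ih.2 hι f fun i => (hf i).1, ?_⟩
      rw [hnormal.map_iSup (Ordinal.bddAbove_range f)]
      exact iSup_congr fun i => (hf i).2

/-- The supremum of the ω-iteration starting at the least element `ν` of `C^n` above `ξ`
and iterating the increasing enumeration of `{c ∈ C^n : ν < c}` is the least element of
`C^{n+1}` strictly above `ξ` (the paper's `f_{n+1}(ξ,0)`). -/
theorem iSup_iterate_isLeast_shelahC_succ (n : ℕ) (hn : 1 ≤ n)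
    (ξ : Cardinal) (hξ : ℵ₀ ≤ ξ)
    (ν : Cardinal) (hν : IsLeast {c | c ∈ ShelahC n ∧ ξ < c} ν)
    (e : Ordinal → Cardinal)
    (he : ∀ o : Ordinal,
      e o = (Ordinal.enumOrd (Cardinal.ord '' {c | c ∈ ShelahC n ∧ ν < c}) o).card)
    (ρ : ℕ → Cardinal) (h0 : ρ 0 = ν)
    (hs : ∀ k : ℕ, ρ (k + 1) = e ((ρ k).ord)) :
    IsLeast {c | c ∈ ShelahC (n + 1) ∧ ξ < c} (⨆ k, ρ k) := by
  obtain ⟨⟨hνC, hξν⟩, hνmin⟩ := hν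
  obtain ⟨hSu, hSc⟩ := snSet_spec n
  have hνinf : ℵ₀ ≤ ν := shelahC_infinite n hνC
  set S' : Set Ordinal.{0} := Cardinal.ord '' {c | c ∈ ShelahC n ∧ ν < c} with hS'def
  have hmemS' : ∀ o, o ∈ S' ↔ o ∈ SnSet n ∧ ν.ord < o := by
    intro o
    constructor
    · rintro ⟨c, ⟨hc, hvc⟩, rfl⟩
      exact ⟨⟨c, hc, rfl⟩, Cardinal.ord_lt_ord.2 hvc⟩
    · rintro ⟨⟨c, hc, rfl⟩, hvc⟩
      exact ⟨c, ⟨hc, Cardinal.ord_lt_ord.1 hvc⟩, rfl⟩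
  have hS'sub : S' ⊆ SnSet n := fun o ho => ((hmemS' o).1 ho).1
  have hS'u : ¬ BddAbove S' := by
    rintro ⟨b, hb⟩
    apply hSu
    refine ⟨max b ν.ord, fun x hx => ?_⟩
    rcases le_or_gt x ν.ord with h | h
    · exact h.trans (le_max_right _ _)
    · exact (hb ((hmemS' x).2 ⟨hx, h⟩)).trans (le_max_left _ _)
  have hS'c : IsClosed S' := by
    have heq : S' = SnSet n ∩ Ici (ν.ord + 1) := by
      ext o
      rw [hmemS' o]
      simp [Set.mem_Ici, Order.add_one_le_iff]
    rw [heq]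
    exact hSc.inter isClosed_Ici
  have hg : Order.IsNormal (Ordinal.enumOrd S') := (Ordinal.enumOrd_isNormal_iff_isClosed hS'u).2 hS'c
  have hiter : ∀ k, (ρ k).ord = (Ordinal.enumOrd S')^[k] ν.ord := by
    intro k
    induction k with
    | zero => rw [h0]; rfl
    | succ k ihk =>
      rw [Function.iterate_succ_apply', ← ihk, hs k, he]
      obtain ⟨c, _, hc⟩ := Ordinal.enumOrd_mem hS'u ((ρ k).ord)
      rw [← hc, Cardinal.card_ord]
  have hlamord : (⨆ k, ρ k).ord = Ordinal.nfp (Ordinal.enumOrd S') ν.ord := by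
    rw [ord_iSup ρ, ← Ordinal.iSup_iterate_eq_nfp]
    exact iSup_congr hiter
  have hfix : Ordinal.enumOrd S' (⨆ k, ρ k).ord = (⨆ k, ρ k).ord := by
    rw [hlamord]
    exact Ordinal.nfp_fp hg ν.ord
  have hlamS' : (⨆ k, ρ k).ord ∈ S' := hfix ▸ Ordinal.enumOrd_mem hS'u (⨆ k, ρ k).ord
  have hlamC : (⨆ k, ρ k) ∈ ShelahC n := by
    obtain ⟨c, hc, hceq⟩ := hS'sub hlamS'
    exact Cardinal.ord_injective hceq ▸ hc
  have hfixSn : Ordinal.enumOrd (SnSet n) (⨆ k, ρ k).ord = (⨆ k, ρ k).ord :=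
    le_antisymm ((Ordinal.enumOrd_le_of_subset hS'u hS'sub (⨆ k, ρ k).ord).trans hfix.le)
      (Ordinal.le_enumOrd_self hSu)
  have hlamsucc : (⨆ k, ρ k) ∈ ShelahC (n+1) :=
    (mem_shelahC_succ_iff hSu _).2 ⟨hlamC, hfixSn⟩
  have hξlam : ξ < ⨆ k, ρ k :=
    hξν.trans_le (h0 ▸ le_ciSup (Cardinal.bddAbove_range ρ) 0)
  refine ⟨⟨hlamsucc, hξlam⟩, ?_⟩
  rintro μ ⟨hμsucc, hξμ⟩
  obtain ⟨hμC, hμfix⟩ := (mem_shelahC_succ_iff hSu μ).1 hμsucc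
  have hμinf : ℵ₀ ≤ μ := shelahC_infinite n hμC
  have hνμ : ν ≤ μ := hνmin ⟨hμC, hξμ⟩
  have hνltμ : ν < μ := by
    rcases hνμ.lt_or_eq with h | h
    · exact h
    · exfalso
      subst h
      have h1 : otype {x | x ∈ SnSet n ∧ x < ν.ord} = Ordinal.lift.{1} ν.ord := by
        have := otype_enumOrd hSu ν.ord
        rwa [hμfix] at this
      have h2 : {x | x ∈ SnSet n ∧ x < ν.ord} ⊆ Iio (ξ.ord + 1) := by
        rintro x ⟨⟨c, hc, rfl⟩, hlt⟩
        have hcξ : c ≤ ξ := by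
          by_contra hcon
          exact (hνmin ⟨hc, not_le.1 hcon⟩).not_gt (Cardinal.ord_lt_ord.1 hlt)
        exact lt_of_le_of_lt (Cardinal.ord_le_ord.2 hcξ) (lt_add_one _)
      have h3 := otype_le_of_subset_Iio h2
      rw [h1, Ordinal.lift_le] at h3
      have h4 : ξ.ord + 1 < ν.ord := by
        rw [Ordinal.add_one_eq_succ]
        exact (Cardinal.isSuccLimit_ord hνinf).succ_lt (Cardinal.ord_lt_ord.2 hξν)
      exact h4.not_ge h3
  have hμS' : μ.ord ∈ S' := (hmemS' μ.ord).2 ⟨⟨μ, hμC, rfl⟩, Cardinal.ord_lt_ord.2 hνltμ⟩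
  obtain ⟨t, ht⟩ := Ordinal.enumOrd_surjective hS'u hμS'
  have hμt : μ.ord ≤ t := by
    by_contra hcon
    push_neg at hcon
    have hA : otype {x | x ∈ S' ∧ x < μ.ord} = Ordinal.lift.{1} t := by
      have := otype_enumOrd hS'u t
      rwa [ht] at this
    have hB : otype {x | x ∈ SnSet n ∧ x < μ.ord} = Ordinal.lift.{1} μ.ord := by
      have := otype_enumOrd hSu μ.ord
      rwa [hμfix] at this
    have hsplit := otype_split {x | x ∈ SnSet n ∧ x < μ.ord} ν.ord
    have hseteq : {x | x ∈ {x | x ∈ SnSet n ∧ x < μ.ord} ∧ ν.ord < x}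
        = {x | x ∈ S' ∧ x < μ.ord} := by
      ext x
      simp only [mem_setOf_eq, hmemS' x]
      tauto
    rw [hseteq, hA, hB, ← Ordinal.lift_add, Ordinal.lift_le] at hsplit
    have h1 : ν.ord + 1 < μ.ord := by
      rw [Ordinal.add_one_eq_succ]
      exact (Cardinal.isSuccLimit_ord hμinf).succ_lt (Cardinal.ord_lt_ord.2 hνltμ)
    exact (Ordinal.isPrincipal_add_ord hμinf h1 hcon).not_ge hsplit
  have h5 : Ordinal.enumOrd S' μ.ord ≤ μ.ord := by
    calc Ordinal.enumOrd S' μ.ord ≤ Ordinal.enumOrd S' t :=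
          (Ordinal.enumOrd_strictMono hS'u).monotone hμt
      _ = μ.ord := ht
  have h6 : (⨆ k, ρ k).ord ≤ μ.ord := by
    rw [hlamord]
    exact Ordinal.nfp_le_fp (Ordinal.enumOrd_strictMono hS'u).monotone
      (Cardinal.ord_le_ord.2 hνμ) h5
  exact Cardinal.ord_le_ord.1 h6
end
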